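/- arXiv:2511.22564 — 3 statements merged into one kernel-verified Lean document; each statement's English description precedes it below -/
import Mathlib

section
/- Suppose E : [0,∞) → (0,∞) is differentiable and satisfies the differential inequality E'(t) ≤ c E(t) − 2ε C E(t)^{1+2/d} for all t > 0, where c, ε, C, d > 0. Then for all t > 0, E(t) ≤ ( (2εC/c)(1 − exp(−2ct/d)) )^{−d/2}. -/
/-!
With `F = E ^ (-2/d)` the inequality `E' ≤ c E - 2εC E^{1+2/d}` becomes the linear inequality
`F' + k F ≥ k M` with `k = 2c/d` and `M = 2εC/c`. Then `exp (k s) * (F s - M)` is nondecreasing, so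
`F t ≥ M + (F 0 - M) e^{-kt} > M (1 - e^{-kt})` because `F 0 > 0`; raising to the power `-d/2`
gives the bound, independently of `E 0`.
-/

open Real Set

theorem le_of_deriv_add_mul_ge {F F' : ℝ → ℝ} {k M a b : ℝ} (hab : a ≤ b)
    (hcont : ContinuousOn F (Icc a b)) (hderiv : ∀ s ∈ Ioo a b, HasDerivAt F (F' s) s)
    (hineq : ∀ s ∈ Ioo a b, k * M ≤ F' s + k * F s) :
    M + (F a - M) * exp (-(k * (b - a))) ≤ F b := by
  set H : ℝ → ℝ := fun s => exp (k * s) * (F s - M)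
  have hH_deriv : ∀ s ∈ Ioo a b, HasDerivAt H (exp (k * s) * (F' s + k * F s - k * M)) s := by
    intro s hs
    have hexp : HasDerivAt (fun u => exp (k * u)) (exp (k * s) * k) s := by
      simpa using ((hasDerivAt_id s).const_mul k).exp
    exact (hexp.mul ((hderiv s hs).sub_const M)).congr_deriv (by ring)
  have hH_mono : MonotoneOn H (Icc a b) := by
    refine monotoneOn_of_hasDerivWithinAt_nonneg (convex_Icc a b)
      (f' := fun s => exp (k * s) * (F' s + k * F s - k * M)) ?_ ?_ ?_
    · exact (continuous_exp.comp (continuous_const.mul continuous_id)).continuousOn.mul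
        (hcont.sub continuousOn_const)
    · rw [interior_Icc]
      exact fun s hs => (hH_deriv s hs).hasDerivWithinAt
    · rw [interior_Icc]
      exact fun s hs => mul_nonneg (exp_pos _).le (by linarith [hineq s hs])
  have hHab : exp (k * a) * (F a - M) ≤ exp (k * b) * (F b - M) :=
    hH_mono (left_mem_Icc.mpr hab) (right_mem_Icc.mpr hab) hab
  have hexp : exp (k * b) * exp (-(k * (b - a))) = exp (k * a) := by
    rw [← exp_add]; ring_nf
  have hscaled : 0 ≤ exp (k * b) * (F b - (M + (F a - M) * exp (-(k * (b - a))))) := by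
    linear_combination hHab + (F a - M) * hexp
  exact sub_nonneg.mp ((mul_nonneg_iff_of_pos_left (exp_pos _)).mp hscaled)

/-- Here `x` stands for `E t` and `e` for `E' t`, so the right side is `F' + (2c/d) F` for
`F = E ^ (-2/d)`. -/
theorem rpow_neg_two_div_deriv_ge {x e c a d : ℝ} (hx : 0 < x) (hd : 0 < d)
    (h : e ≤ c * x - a * x ^ (1 + 2 / d)) :
    2 * a / d ≤ e * -(2 / d) * x ^ (-(2 / d) - 1) + 2 * c / d * x ^ (-(2 / d)) := by
  have hfactor : -(2 / d) * x ^ (-(2 / d) - 1) ≤ 0 :=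
    mul_nonpos_of_nonpos_of_nonneg (by have := div_pos two_pos hd; linarith)
      (rpow_pos_of_pos hx _).le
  have hmul := mul_le_mul_of_nonpos_right h hfactor
  have hpow_one : x ^ (-(2 / d) - 1) * x = x ^ (-(2 / d)) := by
    rw [← rpow_add_one hx.ne']; ring_nf
  have hpow_cancel : x ^ (1 + 2 / d) * x ^ (-(2 / d) - 1) = 1 := by
    rw [← rpow_add hx]; ring_nf; exact rpow_zero x
  have hexpand : (c * x - a * x ^ (1 + 2 / d)) * (-(2 / d) * x ^ (-(2 / d) - 1)) =
      2 * a / d - 2 * c / d * x ^ (-(2 / d)) := by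
    linear_combination (-(2 / d) * c) * hpow_one + (2 / d * a) * hpow_cancel
  linarith

theorem le_rpow_neg_half_of_le_rpow_neg_two_div {x y d : ℝ} (hx : 0 < x) (hy : 0 < y)
    (hd : 0 < d) (h : y ≤ x ^ (-(2 / d))) : x ≤ y ^ (-(d / 2)) := by
  have hinv : -(d / 2) = (-(2 / d))⁻¹ := by rw [inv_neg, inv_div]
  rw [hinv, le_rpow_inv_iff_of_neg hx hy (by have := div_pos two_pos hd; linarith)]
  exact h

/-- ODE comparison lemma for the Nash-type heat kernel bound: if
`E' ≤ c E − 2 ε C E^{1+2/d}` then `E(t) ≤ ((2εC/c)(1 − e^{−2ct/d}))^{−d/2}`. -/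
theorem stmt_1 (c ε C d : ℝ) (hc : 0 < c) (hε : 0 < ε) (hC : 0 < C) (hd : 0 < d)
    (E : ℝ → ℝ) (hEpos : ∀ t, 0 ≤ t → 0 < E t)
    (hEdiff : ∀ t, 0 ≤ t → DifferentiableAt ℝ E t)
    (hODE : ∀ t, 0 < t → deriv E t ≤ c * E t - 2 * ε * C * (E t) ^ (1 + 2 / d)) :
    ∀ t, 0 < t →
      E t ≤ ((2 * ε * C / c) * (1 - Real.exp (-(2 * c * t) / d))) ^ (-(d / 2)) := by
  intro t ht
  set k := 2 * c / d
  set M := 2 * ε * C / c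
  have hF_deriv : ∀ s, 0 ≤ s → HasDerivAt (fun u => E u ^ (-(2 / d)))
      (deriv E s * -(2 / d) * E s ^ (-(2 / d) - 1)) s := fun s hs =>
    (hEdiff s hs).hasDerivAt.rpow_const (Or.inl (hEpos s hs).ne')
  have hGronwall : M + (E 0 ^ (-(2 / d)) - M) * exp (-(k * (t - 0))) ≤ E t ^ (-(2 / d)) := by
    refine le_of_deriv_add_mul_ge ht.le
      (fun s hs => (hF_deriv s hs.1).continuousAt.continuousWithinAt)
      (fun s hs => hF_deriv s hs.1.le) fun s hs => ?_
    have hkM : k * M = 2 * (2 * ε * C) / d := by simp only [k, M]; field_simp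
    rw [hkM]
    exact rpow_neg_two_div_deriv_ge (hEpos s hs.1.le) hd (hODE s hs.1)
  have hdecay : exp (-(k * t)) < 1 := exp_lt_one_iff.mpr (neg_neg_of_pos (by positivity))
  have hF0 : 0 < E 0 ^ (-(2 / d)) := rpow_pos_of_pos (hEpos 0 le_rfl) _
  have hexp_eq : -(2 * c * t) / d = -(k * t) := by ring
  rw [hexp_eq]
  refine le_rpow_neg_half_of_le_rpow_neg_two_div (hEpos t ht.le)
    (mul_pos (by positivity) (by linarith)) hd ?_
  rw [sub_zero] at hGronwall
  linarith [mul_pos hF0 (exp_pos (-(k * t)))]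
end

section
/- Let p̃, q̃ : X → [0,∞) be unnormalized densities with normalizations p = p̃/∫p̃, q = q̃/∫q̃ and ratio r = q/p. Given points x¹,…,x^N in X, suppose y¹,…,y^N are conditionally i.i.d. given (x¹,…,x^N), each with P(yⁱ = x^j) = r̃(x^j)/Σ_n r̃(xⁿ) where r̃ = q̃/p̃. Then for any bounded measurable h : X → ℝ and any a > 0, with probability at least 1 − 2 exp(−2Na²/‖h‖²_osc): | (1/N) Σᵢ h(yⁱ) − ∫ h q dx | ≤ ‖h − ∫ h q dx‖_∞ · |1 − (1/N) Σᵢ r(xⁱ)| + | (1/N) Σᵢ r(xⁱ)(h(xⁱ) − ∫ h q dx) | + a. -/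
/-!
Conditionally on the first-stage points `xⁱ`, the values `h (yⁱ)` are i.i.d., take values in an
interval of length `‖h‖_osc`, and have mean `∑ⱼ wⱼ h (xʲ)` with `wⱼ = r̃(xʲ) / ∑ₙ r̃(xⁿ)`;
Hoeffding's inequality bounds their fluctuation around that mean by `a`. The remaining bias
`∑ⱼ wⱼ h (xʲ) − ∫ h q` is deterministic: since `r(xⁱ)` is proportional to `wᵢ`, it equals
`bias · (1 − R) + (1/N) ∑ᵢ r(xⁱ)(h(xⁱ) − ∫ h q)` with `R = (1/N) ∑ᵢ r(xⁱ)`.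

Since the indices `J i` need not be measurable, their joint law is only dominated (by a finite
union bound and independence) by the product law on `Fin N → Fin N`, where Mathlib's sub-Gaussian
Hoeffding inequality applies; the bound on each section passes to the product measure through a
measurable hull.
-/

open MeasureTheory ProbabilityTheory Set Finset

section FiniteProduct

variable {ι κ : Type*} [MeasurableSpace ι] [DiscreteMeasurableSpace ι] [Fintype κ]

lemma measure_preimage_le_pi [Fintype ι] {Ω : Type*} [MeasurableSpace Ω] {μ : Measure Ω}
    {J : κ → Ω → ι} (hJ : iIndepFun J μ) (P : Measure ι) [IsFiniteMeasure P]
    (hlaw : ∀ k j, μ (J k ⁻¹' {j}) = P {j}) (S : Set (κ → ι)) :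
    μ {ω | (fun k ↦ J k ω) ∈ S} ≤ Measure.pi (fun _ ↦ P) S := by
  classical
  have hS : {ω | (fun k ↦ J k ω) ∈ S}
      = ⋃ t ∈ S.toFinset, ⋂ k ∈ (univ : Finset κ), J k ⁻¹' {t k} := by
    ext ω; simp [← funext_iff]
  calc μ {ω | (fun k ↦ J k ω) ∈ S}
      ≤ ∑ t ∈ S.toFinset, μ (⋂ k ∈ (univ : Finset κ), J k ⁻¹' {t k}) := by
        rw [hS]; exact measure_biUnion_finset_le _ _
    _ = ∑ t ∈ S.toFinset, Measure.pi (fun _ ↦ P) {t} := by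
        refine Finset.sum_congr rfl fun t _ ↦ ?_
        rw [iIndepFun_iff_measure_inter_preimage_eq_mul.1 hJ univ
          (fun _ _ ↦ MeasurableSet.of_discrete), Measure.pi_singleton]
        simp only [hlaw]
    _ = Measure.pi (fun _ ↦ P) S := by
        rw [sum_measure_singleton, coe_toFinset]

lemma pi_measureReal_le_abs_sum_sub_integral_le (P : Measure ι) [IsProbabilityMeasure P]
    {f : ι → ℝ} {A c : ℝ} (hf : ∀ j, f j ∈ Icc A (A + c)) {ε : ℝ} (hε : 0 ≤ ε) :
    (Measure.pi fun _ : κ ↦ P).real {t | ε ≤ |∑ k, (f (t k) - ∫ j, f j ∂P)|}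
      ≤ 2 * Real.exp (-(2 * ε ^ 2) / (Fintype.card κ * c ^ 2)) := by
  set X : κ → (κ → ι) → ℝ := fun k t ↦ f (t k) - ∫ j, f j ∂P
  have hsubG : ∀ k, HasSubgaussianMGF (X k) ((‖c‖₊ / 2) ^ 2) (Measure.pi fun _ ↦ P) := by
    intro k
    have hP := hasSubgaussianMGF_of_mem_Icc (μ := P) Measurable.of_discrete.aemeasurable
      (ae_of_all _ hf)
    rw [add_sub_cancel_left] at hP
    have hPk : HasSubgaussianMGF (fun j ↦ f j - ∫ j, f j ∂P) ((‖c‖₊ / 2) ^ 2)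
        ((Measure.pi fun _ ↦ P).map (Function.eval k)) := by
      rwa [(measurePreserving_eval (fun _ : κ ↦ P) k).map_eq]
    exact HasSubgaussianMGF.of_map (μ := Measure.pi fun _ ↦ P)
      (measurable_pi_apply k).aemeasurable hPk
  have hX : iIndepFun X (Measure.pi fun _ ↦ P) :=
    iIndepFun_pi (X := fun _ j ↦ f j - ∫ j, f j ∂P) fun _ ↦ Measurable.of_discrete.aemeasurable
  have hbound : Real.exp (-ε ^ 2 / (2 * ((∑ _k : κ, (‖c‖₊ / 2) ^ 2 : NNReal) : ℝ)))
      = Real.exp (-(2 * ε ^ 2) / (Fintype.card κ * c ^ 2)) := by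
    congr 1
    push_cast
    simp only [Finset.sum_const, card_univ, nsmul_eq_mul, Real.norm_eq_abs]
    rw [div_pow, sq_abs]
    ring
  have hupper := HasSubgaussianMGF.measure_sum_ge_le_of_iIndepFun hX (s := univ)
    (fun k _ ↦ hsubG k) hε
  have hlower := HasSubgaussianMGF.measure_sum_ge_le_of_iIndepFun
    (hX.comp (fun _ ↦ Neg.neg) fun _ ↦ measurable_neg) (s := univ) (fun k _ ↦ (hsubG k).neg) hε
  show (Measure.pi fun _ : κ ↦ P).real {t | ε ≤ |∑ k, X k t|} ≤ _
  calc (Measure.pi fun _ : κ ↦ P).real {t | ε ≤ |∑ k, X k t|}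
      ≤ (Measure.pi fun _ : κ ↦ P).real
          ({t | ε ≤ ∑ k, X k t} ∪ {t | ε ≤ ∑ k, (Neg.neg ∘ X k) t}) := by
        refine measureReal_mono fun t ht ↦ ?_
        simp only [mem_ofPred_eq, Function.comp_apply, sum_neg_distrib] at ht ⊢
        rcases le_abs'.1 ht with h | h
        · exact Or.inr (le_neg_of_le_neg h)
        · exact Or.inl h
    _ ≤ _ := measureReal_union_le _ _
    _ ≤ _ := by rw [← hbound]; linarith

lemma le_measure_abs_mean_sub_lt [Fintype ι] [Nonempty κ] {Ω : Type*} [MeasurableSpace Ω]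
    {μ : Measure Ω} [IsProbabilityMeasure μ] {J : κ → Ω → ι} (hJ : iIndepFun J μ)
    {w : ι → ℝ} (hw0 : ∀ j, 0 ≤ w j) (hw1 : ∑ j, w j = 1)
    (hlaw : ∀ k j, μ (J k ⁻¹' {j}) = ENNReal.ofReal (w j))
    {f : ι → ℝ} {A c : ℝ} (hf : ∀ j, f j ∈ Icc A (A + c)) {a : ℝ} (ha : 0 ≤ a) :
    ENNReal.ofReal (1 - 2 * Real.exp (-(2 * Fintype.card κ * a ^ 2) / c ^ 2))
      ≤ μ {ω | |(1 / Fintype.card κ : ℝ) * ∑ k, f (J k ω) - ∑ j, w j * f j| < a} := by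
  have hn : (0 : ℝ) < Fintype.card κ := Nat.cast_pos.2 Fintype.card_pos
  set δ := 2 * Real.exp (-(2 * Fintype.card κ * a ^ 2) / c ^ 2)
  let p : PMF ι := PMF.ofFintype (fun j ↦ ENNReal.ofReal (w j)) <| by
    rw [← ENNReal.ofReal_sum_of_nonneg fun j _ ↦ hw0 j, hw1, ENNReal.ofReal_one]
  have hp : ∀ j, p.toMeasure {j} = ENNReal.ofReal (w j) := fun j ↦
    p.toMeasure_apply_singleton j (measurableSet_singleton j)
  have hmean : ∫ j, f j ∂p.toMeasure = ∑ j, w j * f j := by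
    simp only [PMF.integral_eq_sum, smul_eq_mul]
    exact sum_congr rfl fun j _ ↦ by rw [PMF.ofFintype_apply, ENNReal.toReal_ofReal (hw0 j)]
  set bad := {t : κ → ι | Fintype.card κ * a ≤ |∑ k, (f (t k) - ∫ j, f j ∂p.toMeasure)|}
  have hbad : μ {ω | (fun k ↦ J k ω) ∈ bad} ≤ ENNReal.ofReal δ := by
    refine (measure_preimage_le_pi hJ p.toMeasure (fun k j ↦ (hlaw k j).trans (hp j).symm)
      bad).trans ?_
    rw [← ofReal_measureReal]
    refine ENNReal.ofReal_le_ofReal ((pi_measureReal_le_abs_sum_sub_integral_le _ hf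
      (mul_nonneg hn.le ha)).trans_eq ?_)
    congr 2
    field_simp
  have hgood : {ω | (fun k ↦ J k ω) ∈ bad}ᶜ
      ⊆ {ω | |(1 / Fintype.card κ : ℝ) * ∑ k, f (J k ω) - ∑ j, w j * f j| < a} := by
    intro ω hω
    simp only [bad, mem_compl_iff, mem_ofPred_eq, not_le, hmean, sum_sub_distrib, sum_const,
      card_univ, nsmul_eq_mul] at hω ⊢
    rwa [one_div_mul_eq_div, div_sub' hn.ne', abs_div, abs_of_pos hn, div_lt_iff₀ hn, mul_comm a]
  calc ENNReal.ofReal (1 - δ) = 1 - ENNReal.ofReal δ := by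
        rw [ENNReal.ofReal_sub _ (by positivity), ENNReal.ofReal_one]
    _ ≤ 1 - μ {ω | (fun k ↦ J k ω) ∈ bad} := tsub_le_tsub_left hbad 1
    _ ≤ μ {ω | (fun k ↦ J k ω) ∈ bad}ᶜ := by
        rw [tsub_le_iff_right, ← measure_univ (μ := μ), add_comm]
        exact measure_univ_le_add_compl _
    _ ≤ _ := measure_mono hgood

end FiniteProduct

lemma le_prod_apply_of_forall_le_measure_preimage {α β : Type*} [MeasurableSpace α]
    [MeasurableSpace β] {μ : Measure α} {ν : Measure β} [IsProbabilityMeasure μ] [SFinite ν]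
    {E : Set (α × β)} {c : ENNReal} (h : ∀ a, c ≤ ν (Prod.mk a ⁻¹' E)) : c ≤ μ.prod ν E := by
  rw [← measure_toMeasurable E, Measure.prod_apply (measurableSet_toMeasurable _ _)]
  calc c = ∫⁻ _, c ∂μ := by simp
    _ ≤ _ := lintegral_mono fun a ↦
      (h a).trans (measure_mono (preimage_mono (subset_toMeasurable _ _)))

lemma sum_ne_zero_of_measureReal_preimage_singleton_eq_div {Ω ι : Type*} [MeasurableSpace Ω]
    {μ : Measure Ω} [IsProbabilityMeasure μ] [Fintype ι] {f : Ω → ι} {g : ι → ℝ}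
    (h : ∀ j, μ.real (f ⁻¹' {j}) = g j / ∑ n, g n) : ∑ n, g n ≠ 0 := by
  intro hg
  have hnull : ∀ j, μ (f ⁻¹' {j}) = 0 := fun j ↦ by
    rw [← ofReal_measureReal, h j, hg, div_zero, ENNReal.ofReal_zero]
  have hcover : (univ : Set Ω) = ⋃ j, f ⁻¹' {j} := by
    ext ω; simp
  have := measure_iUnion_fintype_le μ fun j ↦ f ⁻¹' {j}
  simp [← hcover, hnull] at this

lemma abs_sub_le_iSup_abs_sub_of_abs_sub_le {X : Type*} {f : X → ℝ} {c : ℝ}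
    (hf : ∀ z w, |f z - f w| ≤ c) (m : ℝ) (z : X) : |f z - m| ≤ ⨆ w, |f w - m| :=
  le_ciSup (f := fun w ↦ |f w - m|) ⟨|f z - m| + c, by
    rintro _ ⟨w, rfl⟩
    linarith [abs_sub_le (f w) (f z) m, hf w z]⟩ z

lemma exists_forall_mem_Icc_add_of_abs_sub_le {ι : Type*} [Finite ι] [Nonempty ι] {f : ι → ℝ}
    {c : ℝ} (hf : ∀ i j, |f i - f j| ≤ c) : ∃ A, ∀ j, f j ∈ Icc A (A + c) := by
  obtain ⟨i, hi⟩ := Finite.exists_min f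
  exact ⟨f i, fun j ↦ ⟨hi j, by linarith [le_abs_self (f j - f i), hf j i]⟩⟩

lemma abs_sum_mul_sub_le_of_proportional {ι : Type*} [Fintype ι] {w r v : ι → ℝ}
    (hw0 : ∀ j, 0 ≤ w j) (hw1 : ∑ j, w j = 1) {κ : ℝ} (hr : ∀ j, r j = κ * w j) {m M : ℝ}
    (hM : ∀ j, |v j - m| ≤ M) (n : ℝ) :
    |∑ j, w j * v j - m| ≤ M * |1 - n * ∑ j, r j| + |n * ∑ j, r j * (v j - m)| := by
  have hcentre : ∑ j, w j * v j - m = ∑ j, w j * (v j - m) := by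
    simp only [mul_sub, sum_sub_distrib, ← sum_mul, hw1, one_mul]
  have hdev : |∑ j, w j * v j - m| ≤ M := by
    rw [hcentre]
    calc |∑ j, w j * (v j - m)| ≤ ∑ j, w j * M := by
          refine (abs_sum_le_sum_abs _ _).trans (sum_le_sum fun j _ ↦ ?_)
          rw [abs_mul, abs_of_nonneg (hw0 j)]
          exact mul_le_mul_of_nonneg_left (hM j) (hw0 j)
      _ = M := by rw [← sum_mul, hw1, one_mul]
  have hsplit : ∑ j, w j * v j - m
      = (∑ j, w j * v j - m) * (1 - n * ∑ j, r j) + n * ∑ j, r j * (v j - m) := by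
    simp only [hr, mul_assoc, ← mul_sum, ← hcentre, hw1]
    ring
  calc |∑ j, w j * v j - m|
      = |(∑ j, w j * v j - m) * (1 - n * ∑ j, r j) + n * ∑ j, r j * (v j - m)| :=
        congrArg abs hsplit
    _ ≤ |(∑ j, w j * v j - m) * (1 - n * ∑ j, r j)| + |n * ∑ j, r j * (v j - m)| :=
        abs_add_le _ _
    _ ≤ M * |1 - n * ∑ j, r j| + |n * ∑ j, r j * (v j - m)| := by
        rw [abs_mul]; gcongr

theorem stmt_6_general {𝒳 : Type*} [MeasurableSpace 𝒳] (μ : Measure 𝒳)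
    {Ω₁ Ω₂ : Type*} [MeasurableSpace Ω₁] [MeasurableSpace Ω₂]
    (μ₁ : Measure Ω₁) (μ₂ : Measure Ω₂)
    [IsProbabilityMeasure μ₁] [IsProbabilityMeasure μ₂]
    (N : ℕ) (hN : 0 < N)
    (ptil qtil : 𝒳 → ℝ)
    (x : Fin N → Ω₁ → 𝒳)
    (J : Fin N → Ω₁ × Ω₂ → Fin N)
    (y : Fin N → Ω₁ × Ω₂ → 𝒳)
    (hy : ∀ i ω, y i ω = x (J i ω) ω.1)
    (hcondIndep : ∀ ω₁ : Ω₁,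
      iIndepFun (fun i ω₂ => J i (ω₁, ω₂)) μ₂)
    (hcondLaw : ∀ (ω₁ : Ω₁) (i j : Fin N),
      (μ₂ {ω₂ | J i (ω₁, ω₂) = j}).toReal
        = (qtil (x j ω₁) / ptil (x j ω₁)) / ∑ n : Fin N, qtil (x n ω₁) / ptil (x n ω₁))
    (h : 𝒳 → ℝ) (hosc a : ℝ) (ha : 0 < a)
    (hhosc : ∀ z w, |h z - h w| ≤ hosc) :
    ENNReal.ofReal (1 - 2 * Real.exp (-(2 * N * a ^ 2) / hosc ^ 2))
      ≤ (μ₁.prod μ₂) {ω |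
          |(1 / N : ℝ) * ∑ i : Fin N, h (y i ω) - ∫ z, h z * (qtil z / ∫ w, qtil w ∂μ) ∂μ|
            ≤ (⨆ z : 𝒳, |h z - ∫ w, h w * (qtil w / ∫ v, qtil v ∂μ) ∂μ|) *
                |1 - (1 / N : ℝ) * ∑ i : Fin N,
                  (qtil (x i ω.1) / ∫ w, qtil w ∂μ) / (ptil (x i ω.1) / ∫ w, ptil w ∂μ)|
              + |(1 / N : ℝ) * ∑ i : Fin N,
                  ((qtil (x i ω.1) / ∫ w, qtil w ∂μ) / (ptil (x i ω.1) / ∫ w, ptil w ∂μ)) *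
                    (h (x i ω.1) - ∫ w, h w * (qtil w / ∫ v, qtil v ∂μ) ∂μ)|
              + a} := by
  have : Nonempty (Fin N) := ⟨⟨0, hN⟩⟩
  set m := ∫ z, h z * (qtil z / ∫ w, qtil w ∂μ) ∂μ
  refine le_prod_apply_of_forall_le_measure_preimage fun ω₁ ↦ ?_
  set rt : Fin N → ℝ := fun j ↦ qtil (x j ω₁) / ptil (x j ω₁)
  have hs : ∑ n, rt n ≠ 0 :=
    sum_ne_zero_of_measureReal_preimage_singleton_eq_div (hcondLaw ω₁ ⟨0, hN⟩)
  set w : Fin N → ℝ := fun j ↦ rt j / ∑ n, rt n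
  have hw0 : ∀ j, 0 ≤ w j := fun j ↦ ENNReal.toReal_nonneg.trans_eq (hcondLaw ω₁ ⟨0, hN⟩ j)
  have hw1 : ∑ j, w j = 1 := by rw [← sum_div, div_self hs]
  have hlaw : ∀ i j, μ₂ ((fun ω₂ ↦ J i (ω₁, ω₂)) ⁻¹' {j}) = ENNReal.ofReal (w j) := fun i j ↦ by
    rw [← ENNReal.ofReal_toReal (measure_ne_top μ₂ _)]
    exact congrArg ENNReal.ofReal (hcondLaw ω₁ i j)
  obtain ⟨A, hA⟩ := exists_forall_mem_Icc_add_of_abs_sub_le fun i j ↦ hhosc (x i ω₁) (x j ω₁)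
  have hr : ∀ i, (qtil (x i ω₁) / ∫ w, qtil w ∂μ) / (ptil (x i ω₁) / ∫ w, ptil w ∂μ)
      = ((∫ w, ptil w ∂μ) / (∫ w, qtil w ∂μ) * ∑ n, rt n) * w i := fun i ↦ by
    rw [mul_assoc, mul_div_cancel₀ _ hs]
    simp only [rt, div_eq_mul_inv, mul_inv, inv_inv]
    ring
  have hbias := abs_sum_mul_sub_le_of_proportional hw0 hw1 hr
    (fun j ↦ abs_sub_le_iSup_abs_sub_of_abs_sub_le hhosc m (x j ω₁)) (1 / N)
  have hHoeffding := le_measure_abs_mean_sub_lt (hcondIndep ω₁) hw0 hw1 hlaw hA ha.le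
  simp only [Fintype.card_fin] at hHoeffding
  refine hHoeffding.trans (measure_mono fun ω₂ hω₂ ↦ ?_)
  simp only [Set.mem_preimage, mem_ofPred_eq, hy] at hω₂ ⊢
  linarith [abs_sub_le ((1 / N : ℝ) * ∑ i, h (x (J i (ω₁, ω₂)) ω₁)) (∑ j, w j * h (x j ω₁)) m]

/-- Resampling error estimate: with probability at least `1 − 2 exp(−2Na²/‖h‖²_osc)`, the
empirical average of `h` over the resampled points `yⁱ = x^{Jⁱ}` is close to `∫ h q`,
up to the two displayed bias terms and `a`.  The resampled indices `J i` are,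
conditionally on the first-stage randomness `ω₁` (which determines the points `x i`),
i.i.d. with `P(J i = j) = r̃(x^j)/Σₙ r̃(xⁿ)` where `r̃ = q̃/p̃`. -/
theorem stmt_6 {𝒳 : Type*} [MeasurableSpace 𝒳] (μ : Measure 𝒳)
    {Ω₁ Ω₂ : Type*} [MeasurableSpace Ω₁] [MeasurableSpace Ω₂]
    (μ₁ : Measure Ω₁) (μ₂ : Measure Ω₂)
    [IsProbabilityMeasure μ₁] [IsProbabilityMeasure μ₂]
    (N : ℕ) (hN : 0 < N)
    (ptil qtil : 𝒳 → ℝ)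
    (hp0 : ∀ z, 0 ≤ ptil z) (hq0 : ∀ z, 0 ≤ qtil z)
    (hpint : Integrable ptil μ) (hqint : Integrable qtil μ)
    (hppos : 0 < ∫ z, ptil z ∂μ) (hqpos : 0 < ∫ z, qtil z ∂μ)
    (x : Fin N → Ω₁ → 𝒳)
    (J : Fin N → Ω₁ × Ω₂ → Fin N)
    (y : Fin N → Ω₁ × Ω₂ → 𝒳)
    (hy : ∀ i ω, y i ω = x (J i ω) ω.1)
    (hcondIndep : ∀ ω₁ : Ω₁,
      iIndepFun (fun i ω₂ => J i (ω₁, ω₂)) μ₂)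
    (hcondLaw : ∀ (ω₁ : Ω₁) (i j : Fin N),
      (μ₂ {ω₂ | J i (ω₁, ω₂) = j}).toReal
        = (qtil (x j ω₁) / ptil (x j ω₁)) / ∑ n : Fin N, qtil (x n ω₁) / ptil (x n ω₁))
    (h : 𝒳 → ℝ) (hosc a : ℝ) (hosc_pos : 0 < hosc) (ha : 0 < a)
    (hhosc : ∀ z w, |h z - h w| ≤ hosc) :
    ENNReal.ofReal (1 - 2 * Real.exp (-(2 * N * a ^ 2) / hosc ^ 2))
      ≤ (μ₁.prod μ₂) {ω |
          |(1 / N : ℝ) * ∑ i : Fin N, h (y i ω) - ∫ z, h z * (qtil z / ∫ w, qtil w ∂μ) ∂μ|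
            ≤ (⨆ z : 𝒳, |h z - ∫ w, h w * (qtil w / ∫ v, qtil v ∂μ) ∂μ|) *
                |1 - (1 / N : ℝ) * ∑ i : Fin N,
                  (qtil (x i ω.1) / ∫ w, qtil w ∂μ) / (ptil (x i ω.1) / ∫ w, ptil w ∂μ)|
              + |(1 / N : ℝ) * ∑ i : Fin N,
                  ((qtil (x i ω.1) / ∫ w, qtil w ∂μ) / (ptil (x i ω.1) / ∫ w, ptil w ∂μ)) *
                    (h (x i ω.1) - ∫ w, h w * (qtil w / ∫ v, qtil v ∂μ) ∂μ)|
              + a} :=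
  stmt_6_general μ μ₁ μ₂ N hN ptil qtil x J y hy hcondIndep hcondLaw h hosc a ha hhosc
end

section
/- Let U : ℝ^d → ℝ be continuous, K ⊆ ℝ^d measurable, and K̃ ⊆ K a nonempty measurable set with positive Lebesgue measure such that sup_{x∈K̃} U(x) ≤ inf_{y∈Kᶜ} U(y) − C_K for some constant C_K > 0. Define π_ε(A) = ∫_A e^{−U/ε} dx / ∫_{ℝ^d} e^{−U/ε} dx, and assume ∫ e^{−U} dx < ∞ and ∫ e^{−U/ε} dx < ∞. Then for every 0 < ε < 1: π_ε(K) ≥ 1 − C_P exp(−C_K/ε), where C_P = exp(C_K) · π_1(Kᶜ)/π_1(K̃). -/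
/-!
Write `e^{-U/ε} = e^{(1-1/ε) U} e^{-U}`; for `ε ≤ 1` the factor `e^{(1-1/ε) U}` is decreasing in `U`,
and every value of `U` on `Kᶜ` exceeds every value on `K̃` by at least `C_K`. Comparing the two
weights pointwise at `(y, x) ∈ Kᶜ × K̃` and integrating in `y`, then in `x`, gives
`∫_{Kᶜ} e^{-U/ε} · ∫_{K̃} e^{-U} ≤ e^{(1-1/ε) C_K} ∫_{Kᶜ} e^{-U} · ∫_{K̃} e^{-U/ε}`.
Bounding `∫_{K̃} e^{-U/ε}` by the full partition function and using `π_ε(K) = 1 - π_ε(Kᶜ)`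
finishes the proof.
-/

open MeasureTheory Real

theorem exp_neg_div_mul_exp_neg_le {ε u v c : ℝ} (hε : 0 < ε) (hε1 : ε ≤ 1) (huv : u ≤ v - c) :
    exp (-v / ε) * exp (-u) ≤ exp (-v) * (exp c * exp (-c / ε) * exp (-u / ε)) := by
  simp only [← exp_add, exp_le_exp]
  have hgap : 0 ≤ (1 / ε - 1) * (v - u - c) :=
    mul_nonneg (sub_nonneg.2 (one_le_one_div hε hε1)) (by linarith)
  linear_combination hgap

section Gibbs

variable {α : Type*} [MeasurableSpace α] {μ : Measure α} {U : α → ℝ} {ε : ℝ}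

theorem setIntegral_exp_pos {f : α → ℝ} {s : Set α} (hs : μ s ≠ 0)
    (hf : Integrable (fun x => exp (f x)) μ) : 0 < ∫ x in s, exp (f x) ∂μ :=
  haveI : NeZero (μ.restrict s) := ⟨by rwa [Ne, Measure.restrict_eq_zero]⟩
  integral_exp_pos hf.restrict

theorem setIntegral_mul_setIntegral_le_of_gap {S T : Set α} (hS : MeasurableSet S)
    (hT : MeasurableSet T) {c : ℝ} (hε : 0 < ε) (hε1 : ε ≤ 1)
    (hgap : ∀ x ∈ T, ∀ y ∈ S, U x ≤ U y - c)
    (hint1 : Integrable (fun x => exp (-U x)) μ) (hintε : Integrable (fun x => exp (-U x / ε)) μ) :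
    (∫ y in S, exp (-U y / ε) ∂μ) * ∫ x in T, exp (-U x) ∂μ ≤
      exp c * exp (-c / ε) * (∫ y in S, exp (-U y) ∂μ) * ∫ x in T, exp (-U x / ε) ∂μ := by
  set k := exp c * exp (-c / ε)
  have inner : ∀ x ∈ T, (∫ y in S, exp (-U y / ε) ∂μ) * exp (-U x) ≤
      k * (∫ y in S, exp (-U y) ∂μ) * exp (-U x / ε) := by
    intro x hx
    rw [← integral_mul_const, mul_comm k, mul_assoc, ← integral_mul_const]
    exact setIntegral_mono_on (hintε.mul_const _).integrableOn
      (hint1.mul_const _).integrableOn hS fun y hy =>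
      exp_neg_div_mul_exp_neg_le hε hε1 (hgap x hx y hy)
  rw [← integral_const_mul, ← integral_const_mul]
  exact setIntegral_mono_on (hint1.const_mul _).integrableOn (hintε.const_mul _).integrableOn hT
    inner

end Gibbs

theorem stmt_9_general (d : ℕ)
    (U : EuclideanSpace ℝ (Fin d) → ℝ)
    (K Ktil : Set (EuclideanSpace ℝ (Fin d)))
    (hKmeas : MeasurableSet K) (hKtilmeas : MeasurableSet Ktil)
    (hKtilpos : 0 < volume Ktil)
    (CK : ℝ)
    (hsep : ∀ x ∈ Ktil, ∀ y ∈ Kᶜ, U x ≤ U y - CK)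
    (hint1 : Integrable (fun x => Real.exp (-U x)))
    (hintε : ∀ ε : ℝ, 0 < ε → ε < 1 → Integrable (fun x => Real.exp (-U x / ε))) :
    ∀ ε : ℝ, 0 < ε → ε < 1 →
      (∫ x in K, Real.exp (-U x / ε)) / (∫ x, Real.exp (-U x / ε))
        ≥ 1 - (Real.exp CK *
            ((∫ x in Kᶜ, Real.exp (-U x)) / (∫ x, Real.exp (-U x))) /
            ((∫ x in Ktil, Real.exp (-U x)) / (∫ x, Real.exp (-U x)))) *
          Real.exp (-CK / ε) := by
  intro ε hε hε1
  specialize hintε ε hε hε1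
  have hexp_nonneg : ∀ f : EuclideanSpace ℝ (Fin d) → ℝ, 0 ≤ᵐ[volume] fun x => exp (f x) :=
    fun f => ae_of_all _ fun x => (exp_pos _).le
  have hKtil1 : 0 < ∫ x in Ktil, exp (-U x) := setIntegral_exp_pos hKtilpos.ne' hint1
  have hZ1 : 0 < ∫ x, exp (-U x) :=
    hKtil1.trans_le (setIntegral_le_integral hint1 (hexp_nonneg _))
  have hKtilε_le : ∫ x in Ktil, exp (-U x / ε) ≤ ∫ x, exp (-U x / ε) :=
    setIntegral_le_integral hintε (hexp_nonneg _)
  have hZε : 0 < ∫ x, exp (-U x / ε) :=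
    (setIntegral_exp_pos hKtilpos.ne' hintε).trans_le hKtilε_le
  have hgap := setIntegral_mul_setIntegral_le_of_gap hKmeas.compl hKtilmeas hε hε1.le hsep
    hint1 hintε
  have hKc_le : (∫ x in Kᶜ, exp (-U x / ε)) / ∫ x, exp (-U x / ε)
      ≤ exp CK * exp (-CK / ε) * (∫ x in Kᶜ, exp (-U x)) / ∫ x in Ktil, exp (-U x) := by
    rw [div_le_div_iff₀ hZε hKtil1]
    calc _ ≤ _ := hgap
      _ ≤ _ := mul_le_mul_of_nonneg_left hKtilε_le (by positivity)
  have hC : exp CK * ((∫ x in Kᶜ, exp (-U x)) / ∫ x, exp (-U x)) /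
      ((∫ x in Ktil, exp (-U x)) / ∫ x, exp (-U x)) * exp (-CK / ε) =
      exp CK * exp (-CK / ε) * (∫ x in Kᶜ, exp (-U x)) / ∫ x in Ktil, exp (-U x) := by
    field_simp
  rw [hC, eq_sub_of_add_eq (integral_add_compl hKmeas hintε), sub_div, div_self hZε.ne']
  exact sub_le_sub_left hKc_le 1

/-- Low-temperature concentration of the Gibbs measure on the sublevel region `K`:
`π_ε(K) ≥ 1 − C_P e^{−C_K/ε}` with `C_P = e^{C_K} π₁(Kᶜ)/π₁(K̃)`. -/
theorem stmt_9 (d : ℕ)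
    (U : EuclideanSpace ℝ (Fin d) → ℝ) (hU : Continuous U)
    (K Ktil : Set (EuclideanSpace ℝ (Fin d)))
    (hKmeas : MeasurableSet K) (hKtilmeas : MeasurableSet Ktil)
    (hsub : Ktil ⊆ K) (hKtilpos : 0 < volume Ktil)
    (CK : ℝ) (hCK : 0 < CK)
    (hsep : ∀ x ∈ Ktil, ∀ y ∈ Kᶜ, U x ≤ U y - CK)
    (hint1 : Integrable (fun x => Real.exp (-U x)))
    (hintε : ∀ ε : ℝ, 0 < ε → ε < 1 → Integrable (fun x => Real.exp (-U x / ε))) :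
    ∀ ε : ℝ, 0 < ε → ε < 1 →
      (∫ x in K, Real.exp (-U x / ε)) / (∫ x, Real.exp (-U x / ε))
        ≥ 1 - (Real.exp CK *
            ((∫ x in Kᶜ, Real.exp (-U x)) / (∫ x, Real.exp (-U x))) /
            ((∫ x in Ktil, Real.exp (-U x)) / (∫ x, Real.exp (-U x)))) *
          Real.exp (-CK / ε) :=
  stmt_9_general d U K Ktil hKmeas hKtilmeas hKtilpos CK hsep hint1 hintε
end
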